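/- Let τ = [x_{i−1},x_i]×[y_{j−1},y_j] be an axis-parallel rectangle with side lengths h_x = x_i − x_{i−1}, h_y = y_j − y_{j−1} and center (x_τ, y_τ) = ((x_{i−1}+x_i)/2, (y_{j−1}+y_j)/2). Let g ∈ C³(τ), let g^I be the bilinear interpolant of g on τ, and let w be any bilinear function on τ. Then ∫_τ (g − g^I)_x w dx dy = ∫_τ R(g,w) dx dy + (h_x²/12) ( ∫_{l_2} g_{xx} w dy − ∫_{l_4} g_{xx} w dy ), where l_2 = {x_i}×[y_{j−1},y_j] is the right edge, l_4 = {x_{i−1}}×[y_{j−1},y_j] is the left edge, F_τ(x) = ((x − x_τ)² − h_x²/4)/2, J_τ(y) = ((y − y_τ)² − h_y²/4)/2, and R(g,w) = (1/3) F_τ(x)(x − x_τ) g_{xxx} w_x − (h_x²/12) g_{xxx} w + J_τ(y) g_{xyy} [ w − (x − x_τ) w_x − (2/3)(y − y_τ) w_y + (2/3)(x − x_τ)(y − y_τ) w_{xy} ]. -/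

import Mathlib

open MeasureTheory Real Set

noncomputable section

/-- First-order partial derivative in the x-direction. -/
def pdx (f : ℝ × ℝ → ℝ) : ℝ × ℝ → ℝ := fun p => fderiv ℝ f p (1, 0)

/-- First-order partial derivative in the y-direction. -/
def pdy (f : ℝ × ℝ → ℝ) : ℝ × ℝ → ℝ := fun p => fderiv ℝ f p (0, 1)

/-- Mixed partial derivative `∂_x^i ∂_y^j`. -/
def pd (i j : ℕ) (f : ℝ × ℝ → ℝ) : ℝ × ℝ → ℝ := pdx^[i] (pdy^[j] f)

/-- A function is globally a bilinear polynomial `a + bx + cy + dxy`. -/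
def IsBilinear (f : ℝ × ℝ → ℝ) : Prop :=
  ∃ a b c d : ℝ, ∀ p : ℝ × ℝ, f p = a + b * p.1 + c * p.2 + d * (p.1 * p.2)

/-!
Write `e = g - gᴵ`, `m = x_τ`, and `F`, `J` for the kernels `F_τ`, `J_τ`: they vanish at the ends
of their intervals and have second derivative `1`. On each horizontal line, integration by parts
and the trapezoidal rule `∫ u = h/2 (u(x₀) + u(x₁)) + ∫ F u''` give
`∫ e_x w dx = (e(x₁,y) - e(x₀,y)) w(m,y) - w_x ∫ F g_xx dx`, and integrating `g_xxx` by parts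
against `F (x - m) / 3` and against `w` turns `-w_x ∫ F g_xx` into the `g_xxx`-part of `R` plus
the edge terms. For bilinear `w` the bracket in `R` equals `λ(y) = w(m,y) - 2/3 (y - y_τ) w_y`,
which does not depend on `x`, so the `g_xyy`-part of `R` integrates in `x` to `J δ'' λ` with
`δ = e(x₁,·) - e(x₀,·)`. Since `gᴵ` interpolates `g` at the corners, `δ` vanishes at `y₀` and
`y₁`, and two integrations by parts in `y` give `∫ δ w(m,·) = ∫ J δ'' λ`.
-/

/-- `bubble a b t = (t - a) (t - b) / 2`; it is `F_τ` for `[x₀, x₁]` and `J_τ` for `[y₀, y₁]`. -/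
def bubble (a b t : ℝ) : ℝ := ((t - (a + b) / 2) ^ 2 - (b - a) ^ 2 / 4) / 2

section OneDim

variable {a b : ℝ}

@[simp] lemma bubble_left : bubble a b a = 0 := by unfold bubble; ring

@[simp] lemma bubble_right : bubble a b b = 0 := by unfold bubble; ring

@[fun_prop]
lemma continuous_bubble (a b : ℝ) : Continuous (bubble a b) := by unfold bubble; fun_prop

lemma hasDerivAt_bubble (a b t : ℝ) : HasDerivAt (bubble a b) (t - (a + b) / 2) t := by
  have h := ((((hasDerivAt_id t).sub_const ((a + b) / 2)).fun_pow 2).sub_const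
    ((b - a) ^ 2 / 4)).div_const 2
  exact h.congr_deriv (by simp)

lemma hasDerivAt_sub_center (a b t : ℝ) : HasDerivAt (fun t => t - (a + b) / 2) 1 t :=
  (hasDerivAt_id t).sub_const _

lemma hasDerivAt_bubble_mul_sub_center (a b t : ℝ) :
    HasDerivAt (fun t => 1 / 3 * bubble a b t * (t - (a + b) / 2))
      (bubble a b t + (b - a) ^ 2 / 12) t :=
  (((hasDerivAt_bubble a b t).const_mul (1 / 3)).mul (hasDerivAt_sub_center a b t)).congr_deriv
    (by unfold bubble; ring)

lemma continuous_of_hasDerivAt {f f' : ℝ → ℝ} (hf : ∀ t, HasDerivAt f (f' t) t) : Continuous f :=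
  continuous_iff_continuousAt.2 fun t => (hf t).continuousAt

theorem integral_eq_trapezoid_add_integral_bubble_mul {u u' u'' : ℝ → ℝ}
    (hu : ∀ t, HasDerivAt u (u' t) t) (hu' : ∀ t, HasDerivAt u' (u'' t) t)
    (hu'' : Continuous u'') :
    ∫ t in a..b, u t = (b - a) / 2 * (u a + u b) + ∫ t in a..b, bubble a b t * u'' t := by
  have hcu := continuous_of_hasDerivAt hu
  have hG : ∀ t, HasDerivAt (fun t => (t - (a + b) / 2) * u t - bubble a b t * u' t)
      (u t - bubble a b t * u'' t) t := fun t =>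
    (((hasDerivAt_sub_center a b t).mul (hu t)).sub
      ((hasDerivAt_bubble a b t).mul (hu' t))).congr_deriv (by ring)
  have h := intervalIntegral.integral_eq_sub_of_hasDerivAt (a := a) (b := b) (fun t _ => hG t)
    (by apply Continuous.intervalIntegrable; fun_prop)
  rw [intervalIntegral.integral_sub (hcu.intervalIntegrable _ _)
    (by apply Continuous.intervalIntegrable; fun_prop)] at h
  simp only [bubble_left, bubble_right, zero_mul, sub_zero] at h
  linear_combination h

theorem integral_deriv_mul_eq_sub_trapezoid {u u' u'' ℓ : ℝ → ℝ} {β : ℝ}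
    (hu : ∀ t, HasDerivAt u (u' t) t) (hu' : ∀ t, HasDerivAt u' (u'' t) t)
    (hu'' : Continuous u'') (hℓ : ∀ t, HasDerivAt ℓ β t) :
    ∫ t in a..b, u' t * ℓ t
      = u b * ℓ b - u a * ℓ a
        - β * ((b - a) / 2 * (u a + u b) + ∫ t in a..b, bubble a b t * u'' t) := by
  have hcu := continuous_of_hasDerivAt hu
  have hcu' := continuous_of_hasDerivAt hu'
  have hcℓ := continuous_of_hasDerivAt hℓ
  have h := intervalIntegral.integral_deriv_mul_eq_sub (a := a) (b := b) (fun t _ => hu t)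
    (fun t _ => hℓ t) (hcu'.intervalIntegrable _ _) (continuous_const.intervalIntegrable _ _)
  rw [intervalIntegral.integral_add (by apply Continuous.intervalIntegrable; fun_prop)
    (by apply Continuous.intervalIntegrable; fun_prop), intervalIntegral.integral_mul_const,
    integral_eq_trapezoid_add_integral_bubble_mul hu hu' hu''] at h
  linear_combination h

theorem integral_bubble_remainder_eq {q q' ℓ : ℝ → ℝ} {β : ℝ}
    (hq : ∀ t, HasDerivAt q (q' t) t) (hq' : Continuous q') (hℓ : ∀ t, HasDerivAt ℓ β t) :
    ∫ t in a..b, (1 / 3 * bubble a b t * (t - (a + b) / 2) * q' t * β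
        - (b - a) ^ 2 / 12 * q' t * ℓ t)
      = -β * (∫ t in a..b, bubble a b t * q t) - (b - a) ^ 2 / 12 * (q b * ℓ b - q a * ℓ a) := by
  have hcq := continuous_of_hasDerivAt hq
  have hcℓ := continuous_of_hasDerivAt hℓ
  have hG : ∀ t, HasDerivAt
      (fun t => 1 / 3 * bubble a b t * (t - (a + b) / 2) * q t * β - (b - a) ^ 2 / 12 * q t * ℓ t)
      ((1 / 3 * bubble a b t * (t - (a + b) / 2) * q' t * β - (b - a) ^ 2 / 12 * q' t * ℓ t)
        + β * (bubble a b t * q t)) t := fun t =>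
    ((((hasDerivAt_bubble_mul_sub_center a b t).mul (hq t)).mul_const β).sub
      (((hq t).const_mul ((b - a) ^ 2 / 12)).mul (hℓ t))).congr_deriv (by ring)
  have h := intervalIntegral.integral_eq_sub_of_hasDerivAt (a := a) (b := b) (fun t _ => hG t)
    (by apply Continuous.intervalIntegrable; fun_prop)
  rw [intervalIntegral.integral_add (by apply Continuous.intervalIntegrable; fun_prop)
    (by apply Continuous.intervalIntegrable; fun_prop), intervalIntegral.integral_const_mul] at h
  simp only [bubble_left, bubble_right, mul_zero, zero_mul, zero_sub] at h
  linear_combination h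

theorem integral_mul_eq_integral_bubble_mul {ε ε' ε'' ℓ : ℝ → ℝ} {β : ℝ}
    (hε : ∀ t, HasDerivAt ε (ε' t) t) (hε' : ∀ t, HasDerivAt ε' (ε'' t) t)
    (hε'' : Continuous ε'') (hℓ : ∀ t, HasDerivAt ℓ β t) (ha : ε a = 0) (hb : ε b = 0) :
    ∫ t in a..b, ε t * ℓ t
      = ∫ t in a..b, bubble a b t * ε'' t * (ℓ t - 2 / 3 * (t - (a + b) / 2) * β) := by
  have hcε' := continuous_of_hasDerivAt hε'
  have hcε := continuous_of_hasDerivAt hε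
  have hcℓ := continuous_of_hasDerivAt hℓ
  set φ := fun t => ℓ t - 2 / 3 * (t - (a + b) / 2) * β with hφ_def
  have hφ : ∀ t, HasDerivAt φ (β / 3) t := fun t =>
    ((hℓ t).sub (((hasDerivAt_sub_center a b t).const_mul (2 / 3)).mul_const β)).congr_deriv
      (by ring)
  -- `K = (t - m) φ + F β / 3` is the derivative of `F φ`, and `K' = ℓ`.
  have hG : ∀ t, HasDerivAt
      (fun t => ((t - (a + b) / 2) * φ t + bubble a b t * (β / 3)) * ε t
        - bubble a b t * φ t * ε' t)
      (ε t * ℓ t - bubble a b t * ε'' t * φ t) t := fun t =>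
    (((((hasDerivAt_sub_center a b t).mul (hφ t)).add
      ((hasDerivAt_bubble a b t).mul_const (β / 3))).mul (hε t)).sub
      (((hasDerivAt_bubble a b t).mul (hφ t)).mul (hε' t))).congr_deriv
      (by simp only [hφ_def, Pi.mul_apply, Pi.add_apply]; ring)
  have h := intervalIntegral.integral_eq_sub_of_hasDerivAt (a := a) (b := b) (fun t _ => hG t)
    (by apply Continuous.intervalIntegrable; fun_prop)
  rw [intervalIntegral.integral_sub (by apply Continuous.intervalIntegrable; fun_prop)
    (by apply Continuous.intervalIntegrable; fun_prop)] at h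
  simp only [bubble_left, bubble_right, ha, hb, mul_zero, zero_mul, sub_zero] at h
  exact sub_eq_zero.1 h

end OneDim

section Partials

variable {f h : ℝ × ℝ → ℝ}

lemma hasDerivAt_pdx_slice (hf : Differentiable ℝ f) (x y : ℝ) :
    HasDerivAt (fun t => f (t, y)) (pdx f (x, y)) x :=
  (hf (x, y)).hasFDerivAt.comp_hasDerivAt x ((hasDerivAt_id x).prodMk (hasDerivAt_const x y))

lemma hasDerivAt_pdy_slice (hf : Differentiable ℝ f) (x y : ℝ) :
    HasDerivAt (fun t => f (x, t)) (pdy f (x, y)) y :=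
  (hf (x, y)).hasFDerivAt.comp_hasDerivAt y ((hasDerivAt_const y x).prodMk (hasDerivAt_id y))

lemma ContDiff.pdx {m n : WithTop ℕ∞} (hf : ContDiff ℝ n f) (hmn : m + 1 ≤ n) :
    ContDiff ℝ m (pdx f) :=
  (hf.fderiv_right hmn).clm_apply contDiff_const

lemma ContDiff.pdy {m n : WithTop ℕ∞} (hf : ContDiff ℝ n f) (hmn : m + 1 ≤ n) :
    ContDiff ℝ m (pdy f) :=
  (hf.fderiv_right hmn).clm_apply contDiff_const

lemma contDiff_pd {m n : WithTop ℕ∞} (i j : ℕ) (hf : ContDiff ℝ n f) (hmn : m + i + j ≤ n) :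
    ContDiff ℝ m (pd i j f) := by
  induction i generalizing m with
  | zero =>
    induction j generalizing m with
    | zero => exact hf.of_le (by simpa using hmn)
    | succ j ih =>
      rw [show pd 0 (j + 1) f = pdy (pd 0 j f) from Function.iterate_succ_apply' pdy j f]
      exact (ih (by convert hmn using 1; push_cast; ring)).pdy le_rfl
  | succ i ih =>
    rw [show pd (i + 1) j f = pdx (pd i j f) from Function.iterate_succ_apply' pdx i _]
    exact (ih (by convert hmn using 1; push_cast; ring)).pdx le_rfl

lemma pdx_sub (hf : Differentiable ℝ f) (hh : Differentiable ℝ h) (p : ℝ × ℝ) :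
    pdx (fun q => f q - h q) p = pdx f p - pdx h p := by
  simp only [pdx, fderiv_fun_sub (hf p) (hh p)]
  rfl

end Partials

def bilin (a b c d : ℝ) (p : ℝ × ℝ) : ℝ := a + b * p.1 + c * p.2 + d * (p.1 * p.2)

section Bilinear

variable {a b c d : ℝ}

lemma contDiff_bilin {n : WithTop ℕ∞} : ContDiff ℝ n (bilin a b c d) := by
  unfold bilin
  fun_prop

@[fun_prop]
lemma continuous_bilin : Continuous (bilin a b c d) := (contDiff_bilin (n := 0)).continuous

lemma hasDerivAt_bilin_fst (x y : ℝ) :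
    HasDerivAt (fun t => bilin a b c d (t, y)) (b + d * y) x := by
  have h := (((hasDerivAt_id x).const_mul b).const_add a |>.add_const (c * y)).add
    (((hasDerivAt_id x).mul_const y).const_mul d)
  exact h.congr_deriv (by simp)

lemma hasDerivAt_bilin_snd (x y : ℝ) :
    HasDerivAt (fun s => bilin a b c d (x, s)) (c + d * x) y := by
  have h := (((hasDerivAt_id y).const_mul c).const_add (a + b * x)).add
    (((hasDerivAt_id y).const_mul x).const_mul d)
  exact h.congr_deriv (by simp)

lemma pdx_bilin : pdx (bilin a b c d) = bilin b 0 d 0 := by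
  funext ⟨x, y⟩
  rw [(hasDerivAt_pdx_slice (contDiff_bilin (n := 1)).differentiable_one x y).unique
    (hasDerivAt_bilin_fst x y)]
  simp [bilin]

lemma pdy_bilin : pdy (bilin a b c d) = bilin c d 0 0 := by
  funext ⟨x, y⟩
  rw [(hasDerivAt_pdy_slice (contDiff_bilin (n := 1)).differentiable_one x y).unique
    (hasDerivAt_bilin_snd x y)]
  simp [bilin]

lemma pd_one_one_bilin : pd 1 1 (bilin a b c d) = bilin d 0 0 0 := by
  simp [pd, pdy_bilin, pdx_bilin]

end Bilinear

/-- The integrand `R(g, w)`. -/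
def linRemainder (x0 x1 y0 y1 : ℝ) (g w : ℝ × ℝ → ℝ) (p : ℝ × ℝ) : ℝ :=
  1 / 3 * bubble x0 x1 p.1 * (p.1 - (x0 + x1) / 2) * pd 3 0 g p * pdx w p
    - (x1 - x0) ^ 2 / 12 * pd 3 0 g p * w p
    + bubble y0 y1 p.2 * pd 1 2 g p *
      (w p - (p.1 - (x0 + x1) / 2) * pdx w p - 2 / 3 * (p.2 - (y0 + y1) / 2) * pdy w p
        + 2 / 3 * (p.1 - (x0 + x1) / 2) * (p.2 - (y0 + y1) / 2) * pd 1 1 w p)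

lemma continuous_linRemainder {x0 x1 y0 y1 : ℝ} {g w : ℝ × ℝ → ℝ} (hg : ContDiff ℝ 3 g)
    (hw : ContDiff ℝ 2 w) : Continuous (linRemainder x0 x1 y0 y1 g w) := by
  have h30 : Continuous (pd 3 0 g) := (contDiff_pd 3 0 hg (m := 0) (by norm_num)).continuous
  have h12 : Continuous (pd 1 2 g) := (contDiff_pd 1 2 hg (m := 0) (by norm_num)).continuous
  have hw10 : Continuous (pdx w) := (hw.pdx (m := 0) (by norm_num)).continuous
  have hw01 : Continuous (pdy w) := (hw.pdy (m := 0) (by norm_num)).continuous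
  have hw11 : Continuous (pd 1 1 w) := (contDiff_pd 1 1 hw (m := 0) (by norm_num)).continuous
  unfold linRemainder
  fun_prop

lemma linRemainder_bilin (x0 x1 y0 y1 a b c d x y : ℝ) (g : ℝ × ℝ → ℝ) :
    linRemainder x0 x1 y0 y1 g (bilin a b c d) (x, y)
      = (1 / 3 * bubble x0 x1 x * (x - (x0 + x1) / 2) * pd 3 0 g (x, y) * (b + d * y)
          - (x1 - x0) ^ 2 / 12 * pd 3 0 g (x, y) * bilin a b c d (x, y))
        + bubble y0 y1 y * (bilin a b c d ((x0 + x1) / 2, y)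
            - 2 / 3 * (y - (y0 + y1) / 2) * (c + d * ((x0 + x1) / 2))) * pd 1 2 g (x, y) := by
  simp only [linRemainder, pdx_bilin, pdy_bilin, pd_one_one_bilin, bilin]
  ring

theorem integral_pdx_sub_bilin_mul_bilin {g : ℝ × ℝ → ℝ} (hg : ContDiff ℝ 3 g)
    (x0 x1 y0 y1 a b c d A B C D y : ℝ) :
    ∫ x in x0..x1, pdx (fun q => g q - bilin A B C D q) (x, y) * bilin a b c d (x, y)
      = (∫ x in x0..x1, linRemainder x0 x1 y0 y1 g (bilin a b c d) (x, y))
        + (x1 - x0) ^ 2 / 12 * (pd 2 0 g (x1, y) * bilin a b c d (x1, y)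
            - pd 2 0 g (x0, y) * bilin a b c d (x0, y))
        + ((g (x1, y) - bilin A B C D (x1, y) - (g (x0, y) - bilin A B C D (x0, y)))
              * bilin a b c d ((x0 + x1) / 2, y)
            - bubble y0 y1 y * (pd 0 2 g (x1, y) - pd 0 2 g (x0, y))
              * (bilin a b c d ((x0 + x1) / 2, y)
                - 2 / 3 * (y - (y0 + y1) / 2) * (c + d * ((x0 + x1) / 2)))) := by
  have hgd : Differentiable ℝ g := hg.differentiable (by norm_num)
  have hg10 : ContDiff ℝ 2 (pdx g) := hg.pdx (by norm_num)
  have hg20 : ContDiff ℝ 1 (pd 2 0 g) := contDiff_pd 2 0 hg (by norm_num)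
  have hg30 : Continuous (pd 3 0 g) := (contDiff_pd 3 0 hg (m := 0) (by norm_num)).continuous
  have hg02 : ContDiff ℝ 1 (pd 0 2 g) := contDiff_pd 0 2 hg (by norm_num)
  have hg12 : Continuous (pd 1 2 g) := (contDiff_pd 1 2 hg (m := 0) (by norm_num)).continuous
  have hu : ∀ t, HasDerivAt (fun t => g (t, y) - bilin A B C D (t, y))
      (pdx g (t, y) - (B + D * y)) t := fun t =>
    (hasDerivAt_pdx_slice hgd t y).sub (hasDerivAt_bilin_fst t y)
  have hu' : ∀ t, HasDerivAt (fun t => pdx g (t, y) - (B + D * y)) (pd 2 0 g (t, y)) t :=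
    fun t => (hasDerivAt_pdx_slice (hg10.differentiable (by norm_num)) t y).sub_const _
  have hq : ∀ t, HasDerivAt (fun t => pd 2 0 g (t, y)) (pd 3 0 g (t, y)) t :=
    fun t => hasDerivAt_pdx_slice (hg20.differentiable one_ne_zero) t y
  have hr : ∀ t, HasDerivAt (fun t => pd 0 2 g (t, y)) (pd 1 2 g (t, y)) t :=
    fun t => hasDerivAt_pdx_slice (hg02.differentiable one_ne_zero) t y
  have hℓ : ∀ t, HasDerivAt (fun t => bilin a b c d (t, y)) (b + d * y) t :=
    fun t => hasDerivAt_bilin_fst t y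
  have hpdx : ∀ x, pdx (fun q => g q - bilin A B C D q) (x, y) = pdx g (x, y) - (B + D * y) := by
    intro x
    rw [pdx_sub hgd (contDiff_bilin (n := 1)).differentiable_one, pdx_bilin]
    simp [bilin]
  have hLHS := integral_deriv_mul_eq_sub_trapezoid (a := x0) (b := x1) hu hu' (by fun_prop) hℓ
  have hRx := integral_bubble_remainder_eq (a := x0) (b := x1) hq (by fun_prop) hℓ
  have hRy := intervalIntegral.integral_eq_sub_of_hasDerivAt (a := x0) (b := x1)
    (fun t _ => hr t) (by apply Continuous.intervalIntegrable; fun_prop)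
  simp only [hpdx, linRemainder_bilin]
  rw [intervalIntegral.integral_add (by apply Continuous.intervalIntegrable; fun_prop)
    (by apply Continuous.intervalIntegrable; fun_prop), intervalIntegral.integral_const_mul,
    hLHS, hRx, hRy]
  simp only [bilin]
  ring

theorem integral_jump_mul_bilin_eq {g : ℝ × ℝ → ℝ} (hg : ContDiff ℝ 2 g)
    {x0 x1 y0 y1 A B C D : ℝ} (a b c d : ℝ)
    (h00 : bilin A B C D (x0, y0) = g (x0, y0)) (h10 : bilin A B C D (x1, y0) = g (x1, y0))
    (h01 : bilin A B C D (x0, y1) = g (x0, y1)) (h11 : bilin A B C D (x1, y1) = g (x1, y1)) :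
    ∫ y in y0..y1, (g (x1, y) - bilin A B C D (x1, y) - (g (x0, y) - bilin A B C D (x0, y)))
        * bilin a b c d ((x0 + x1) / 2, y)
      = ∫ y in y0..y1, bubble y0 y1 y * (pd 0 2 g (x1, y) - pd 0 2 g (x0, y))
          * (bilin a b c d ((x0 + x1) / 2, y)
            - 2 / 3 * (y - (y0 + y1) / 2) * (c + d * ((x0 + x1) / 2))) := by
  have hg01 : ContDiff ℝ 1 (pdy g) := hg.pdy (by norm_num)
  have hg02 : Continuous (pd 0 2 g) := (contDiff_pd 0 2 hg (m := 0) (by norm_num)).continuous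
  have he : ∀ x s, HasDerivAt (fun s => g (x, s) - bilin A B C D (x, s))
      (pdy g (x, s) - (C + D * x)) s := fun x s =>
    (hasDerivAt_pdy_slice (hg.differentiable (by norm_num)) x s).sub (hasDerivAt_bilin_snd x s)
  have he' : ∀ x s, HasDerivAt (fun s => pdy g (x, s) - (C + D * x)) (pd 0 2 g (x, s)) s :=
    fun x s => (hasDerivAt_pdy_slice (hg01.differentiable one_ne_zero) x s).sub_const _
  exact integral_mul_eq_integral_bubble_mul (fun s => (he x1 s).sub (he x0 s))
    (fun s => (he' x1 s).sub (he' x0 s)) (by fun_prop)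
    (fun s => hasDerivAt_bilin_snd ((x0 + x1) / 2) s) (by simp [h00, h10]) (by simp [h01, h11])

theorem setIntegral_Icc_prod_Icc {x0 x1 y0 y1 : ℝ} (hx : x0 ≤ x1) (hy : y0 ≤ y1)
    {f : ℝ × ℝ → ℝ} (hf : Continuous f) :
    ∫ p in Icc x0 x1 ×ˢ Icc y0 y1, f p = ∫ y in y0..y1, ∫ x in x0..x1, f (x, y) := by
  have hint : IntegrableOn (fun z : ℝ × ℝ => f z.swap) (Icc y0 y1 ×ˢ Icc x0 x1) :=
    (hf.comp continuous_swap).continuousOn.integrableOn_compact (isCompact_Icc.prod isCompact_Icc)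
  rw [Measure.volume_eq_prod, ← setIntegral_prod_swap, setIntegral_prod _ hint,
    intervalIntegral.integral_of_le hy, ← integral_Icc_eq_integral_Ioc]
  refine setIntegral_congr_fun measurableSet_Icc fun y _ => ?_
  rw [intervalIntegral.integral_of_le hx, ← integral_Icc_eq_integral_Ioc]
  rfl

/-- Lin identity (c): for `g ∈ C³(τ)` with bilinear interpolant `g^I` on the rectangle
`τ = [x₀,x₁]×[y₀,y₁]` and any bilinear `w`,
`∫_τ (g−g^I)_x w = ∫_τ R(g,w) + (h_x²/12)(∫_{l₂} g_{xx} w dy − ∫_{l₄} g_{xx} w dy)`,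
where `l₂`, `l₄` are the right and left edges, `F_τ(x) = ((x−x_τ)² − h_x²/4)/2`,
`J_τ(y) = ((y−y_τ)² − h_y²/4)/2`, and
`R(g,w) = (1/3) F_τ(x)(x−x_τ) g_{xxx} w_x − (h_x²/12) g_{xxx} w
 + J_τ(y) g_{xyy} [w − (x−x_τ) w_x − (2/3)(y−y_τ) w_y + (2/3)(x−x_τ)(y−y_τ) w_{xy}]`. -/
theorem lin_identity_c (x0 x1 y0 y1 : ℝ) (hx : x0 < x1) (hy : y0 < y1)
    (g gI w : ℝ × ℝ → ℝ) (hg : ContDiff ℝ 3 g)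
    (hgIbil : IsBilinear gI)
    (h00 : gI (x0, y0) = g (x0, y0)) (h10 : gI (x1, y0) = g (x1, y0))
    (h01 : gI (x0, y1) = g (x0, y1)) (h11 : gI (x1, y1) = g (x1, y1))
    (hwbil : IsBilinear w) :
    ∫ p in Icc x0 x1 ×ˢ Icc y0 y1, pdx (fun q => g q - gI q) p * w p
      = (∫ p in Icc x0 x1 ×ˢ Icc y0 y1,
          (1 / 3 * (((p.1 - (x0 + x1) / 2) ^ 2 - (x1 - x0) ^ 2 / 4) / 2) *
              (p.1 - (x0 + x1) / 2) * pd 3 0 g p * pdx w p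
            - (x1 - x0) ^ 2 / 12 * pd 3 0 g p * w p
            + (((p.2 - (y0 + y1) / 2) ^ 2 - (y1 - y0) ^ 2 / 4) / 2) * pd 1 2 g p *
              (w p - (p.1 - (x0 + x1) / 2) * pdx w p
                - 2 / 3 * (p.2 - (y0 + y1) / 2) * pdy w p
                + 2 / 3 * (p.1 - (x0 + x1) / 2) * (p.2 - (y0 + y1) / 2) * pd 1 1 w p)))
        + (x1 - x0) ^ 2 / 12 *
            ((∫ y in y0..y1, pd 2 0 g (x1, y) * w (x1, y))
              - ∫ y in y0..y1, pd 2 0 g (x0, y) * w (x0, y)) := by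
  obtain ⟨a, b, c, d, hw⟩ := hwbil
  obtain ⟨A, B, C, D, hgI⟩ := hgIbil
  obtain rfl : w = bilin a b c d := funext hw
  obtain rfl : gI = bilin A B C D := funext hgI
  have he : Continuous (pdx fun q => g q - bilin A B C D q) :=
    ((hg.sub contDiff_bilin).pdx (m := 0) (by norm_num)).continuous
  have hR : Continuous (linRemainder x0 x1 y0 y1 g (bilin a b c d)) :=
    continuous_linRemainder hg contDiff_bilin
  have h20 : Continuous (pd 2 0 g) := (contDiff_pd 2 0 hg (m := 0) (by norm_num)).continuous
  have h02 : Continuous (pd 0 2 g) := (contDiff_pd 0 2 hg (m := 0) (by norm_num)).continuous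
  have hgc := hg.continuous
  have hI : ∀ F : ℝ → ℝ, Continuous F → IntervalIntegrable F volume y0 y1 :=
    fun F hF => hF.intervalIntegrable _ _
  show _ = (∫ p in Icc x0 x1 ×ˢ Icc y0 y1, linRemainder x0 x1 y0 y1 g (bilin a b c d) p) + _
  rw [setIntegral_Icc_prod_Icc hx.le hy.le (by fun_prop), setIntegral_Icc_prod_Icc hx.le hy.le hR,
    intervalIntegral.integral_congr fun y _ =>
      integral_pdx_sub_bilin_mul_bilin hg x0 x1 y0 y1 a b c d A B C D y,
    intervalIntegral.integral_add (hI _ (by fun_prop)) (hI _ (by fun_prop)),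
    intervalIntegral.integral_add (hI _ (by fun_prop)) (hI _ (by fun_prop)),
    intervalIntegral.integral_const_mul,
    intervalIntegral.integral_sub (hI _ (by fun_prop)) (hI _ (by fun_prop)),
    intervalIntegral.integral_sub (hI _ (by fun_prop)) (hI _ (by fun_prop)),
    integral_jump_mul_bilin_eq (hg.of_le (by norm_num)) a b c d h00 h10 h01 h11, sub_self,
    add_zero]
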